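/- arXiv:2303.01631 — 2 statements merged into one kernel-verified Lean document; each statement's English description precedes it below -/
import Mathlib

section
/- Let g be a real-valued random variable with E[g²] > 0. If E[g] ≤ 0 and (E[g²] − E[g]²)/E[g²] ≤ Δ, then Prob(−g ≤ 0) ≤ Δ, i.e., Prob(g ≥ 0) ≤ Δ. -/
open MeasureTheory

/-- Risk contour membership: if `E[g] ≤ 0` and `(E[g²] − E[g]²)/E[g²] ≤ Δ`
(with `E[g²] > 0`), then `Prob(−g ≤ 0) = Prob(g ≥ 0) ≤ Δ`. -/
theorem risk_contour_bound
    {Ω : Type*} [MeasurableSpace Ω] (μ : Measure Ω) [IsProbabilityMeasure μ]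
    (g : Ω → ℝ) (hg : Measurable g)
    (hint : Integrable g μ) (hint2 : Integrable (fun ω => (g ω) ^ 2) μ)
    (Δ : ℝ) (hΔ0 : 0 ≤ Δ) (hΔ1 : Δ ≤ 1)
    (hpos : 0 < ∫ ω, (g ω) ^ 2 ∂μ)
    (hmean : ∫ ω, g ω ∂μ ≤ 0)
    (hratio : ((∫ ω, (g ω) ^ 2 ∂μ) - (∫ ω, g ω ∂μ) ^ 2) / (∫ ω, (g ω) ^ 2 ∂μ) ≤ Δ) :
    (μ {ω | -g ω ≤ 0}).toReal ≤ Δ := by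
  set m := ∫ ω, g ω ∂μ with hm
  set S := ∫ ω, (g ω) ^ 2 ∂μ with hS
  have hP1 : (μ {ω | -g ω ≤ 0}).toReal ≤ 1 := by
    rw [← ENNReal.toReal_one]
    exact ENNReal.toReal_mono ENNReal.one_ne_top prob_le_one
  rcases eq_or_lt_of_le hmean with hm0 | hmlt
  · -- m = 0 : ratio = 1
    have : (1 : ℝ) ≤ Δ := by
      have : (S - m ^ 2) / S = 1 := by
        rw [hm0]; field_simp; ring
      linarith [hratio, this.symm ▸ hratio]
    linarith
  · -- m < 0 : Cantelli with t = -S/m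
    set t : ℝ := -S / m with ht
    have htpos : 0 < t := div_pos_of_neg_of_neg (by linarith) hmlt
    have hf_int : Integrable (fun ω => (g ω + t) ^ 2) μ := by
      have : (fun ω => (g ω + t) ^ 2)
          = fun ω => (g ω) ^ 2 + (2 * t) * g ω + t ^ 2 := by
        funext ω; ring
      rw [this]
      exact ((hint2.add (hint.const_mul (2 * t))).add (integrable_const _))
    have hmarkov := mul_meas_ge_le_integral_of_nonneg
      (μ := μ) (f := fun ω => (g ω + t) ^ 2)
      (ae_of_all _ fun ω => sq_nonneg _) hf_int (t ^ 2)
    have hsubset : {ω | -g ω ≤ 0} ⊆ {ω | t ^ 2 ≤ (g ω + t) ^ 2} := by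
      intro ω hω
      simp only [Set.mem_setOf_eq] at hω ⊢
      have : 0 ≤ g ω := by linarith
      nlinarith
    have hmono : (μ {ω | -g ω ≤ 0}).toReal ≤ (μ {ω | t ^ 2 ≤ (g ω + t) ^ 2}).toReal :=
      ENNReal.toReal_mono (measure_ne_top μ _) (measure_mono hsubset)
    have hintval : ∫ ω, (g ω + t) ^ 2 ∂μ = S + 2 * t * m + t ^ 2 := by
      have : (fun ω => (g ω + t) ^ 2)
          = fun ω => (g ω) ^ 2 + (2 * t) * g ω + t ^ 2 := by
        funext ω; ring
      have hi1 : Integrable (fun ω => (g ω) ^ 2 + (2 * t) * g ω) μ :=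
        hint2.add (hint.const_mul (2 * t))
      rw [this, integral_add hi1 (integrable_const _),
        integral_add hint2 (hint.const_mul (2 * t)), integral_const_mul, integral_const]
      simp [hm, hS]
    have hmne : m ≠ 0 := ne_of_lt hmlt
    have hval : S + 2 * t * m + t ^ 2 = t ^ 2 * ((S - m ^ 2) / S) := by
      rw [ht]; field_simp; ring
    have h1 : t ^ 2 * (μ {ω | -g ω ≤ 0}).toReal ≤ t ^ 2 * ((S - m ^ 2) / S) := by
      calc t ^ 2 * (μ {ω | -g ω ≤ 0}).toReal
          ≤ t ^ 2 * (μ {ω | t ^ 2 ≤ (g ω + t) ^ 2}).toReal := by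
            exact mul_le_mul_of_nonneg_left hmono (sq_nonneg t)
        _ ≤ ∫ ω, (g ω + t) ^ 2 ∂μ := hmarkov
        _ = t ^ 2 * ((S - m ^ 2) / S) := by rw [hintval, hval]
    have h2 : (μ {ω | -g ω ≤ 0}).toReal ≤ (S - m ^ 2) / S :=
      le_of_mul_le_mul_left h1 (pow_pos htpos 2)
    linarith
end

section
/- Let x be an ℝⁿ-valued random variable, Q a positive definite n×n real matrix, and c ∈ ℝⁿ. Set z = (x − c)ᵀQ(x − c) − 1. If E[z] ≤ 0 and (E[z²] − E[z]²)/E[z²] ≤ Δ (with E[z²] > 0), then Prob((x − c)ᵀQ(x − c) ≥ 1) ≤ Δ, i.e., x lies in the ellipsoidal tube cross-section {y : (y − c)ᵀQ(y − c) ≤ 1} with probability at least 1 − Δ. -/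
open MeasureTheory Matrix

/-- Analytical tube-size verification: applying Cantelli's inequality to the
quadratic tube-membership random variable `z = (x − c)ᵀQ(x − c) − 1`. -/
theorem tube_membership_bound
    {Ω : Type*} [MeasurableSpace Ω] (μ : Measure Ω) [IsProbabilityMeasure μ]
    {n : ℕ} (x : Ω → (Fin n → ℝ)) (hx : Measurable x)
    (Q : Matrix (Fin n) (Fin n) ℝ) (hQ : Q.PosDef) (c : Fin n → ℝ) (Δ : ℝ)
    (z : Ω → ℝ)
    (hz : ∀ ω, z ω = (x ω - c) ⬝ᵥ Q.mulVec (x ω - c) - 1)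
    (hint : Integrable z μ) (hint2 : Integrable (fun ω => (z ω) ^ 2) μ)
    (hpos : 0 < ∫ ω, (z ω) ^ 2 ∂μ)
    (hmean : ∫ ω, z ω ∂μ ≤ 0)
    (hratio : ((∫ ω, (z ω) ^ 2 ∂μ) - (∫ ω, z ω ∂μ) ^ 2) / (∫ ω, (z ω) ^ 2 ∂μ) ≤ Δ) :
    (μ {ω | 1 ≤ (x ω - c) ⬝ᵥ Q.mulVec (x ω - c)}).toReal ≤ Δ := by
  set m := ∫ ω, z ω ∂μ with hm
  set S := ∫ ω, (z ω) ^ 2 ∂μ with hS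
  have hset : {ω | 1 ≤ (x ω - c) ⬝ᵥ Q.mulVec (x ω - c)} = {ω | 0 ≤ z ω} := by
    ext ω
    simp only [Set.mem_setOf_eq, hz ω]
    constructor <;> intro h <;> linarith
  rw [hset]
  rcases lt_or_eq_of_le hmean with hmlt | hmeq
  · -- m < 0; Cantelli with t = S / (-m)
    set t : ℝ := S / (-m) with ht
    have htpos : 0 < t := div_pos hpos (by linarith)
    -- Markov on (z + t)^2
    have hint3 : Integrable (fun ω => (z ω + t) ^ 2) μ := by
      have : (fun ω => (z ω + t) ^ 2) =
          fun ω => (z ω) ^ 2 + (2 * t) * z ω + t ^ 2 := by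
        funext ω; ring
      rw [this]
      exact ((hint2.add (hint.const_mul (2 * t))).add (integrable_const _))
    have hI : ∫ ω, (z ω + t) ^ 2 ∂μ = S + 2 * t * m + t ^ 2 := by
      calc ∫ ω, (z ω + t) ^ 2 ∂μ
          = ∫ ω, ((z ω) ^ 2 + ((2 * t) * z ω + t ^ 2)) ∂μ :=
            integral_congr_ae (Filter.Eventually.of_forall fun ω => by ring)
        _ = S + (2 * t * m + t ^ 2) := by
            have e2 : ∫ ω, (2 * t * z ω + t ^ 2) ∂μ = 2 * t * m + t ^ 2 := by
              rw [integral_add (g := fun _ => t ^ 2)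
                (by exact hint.const_mul (2 * t)) (integrable_const _),
                integral_const_mul, integral_const]
              simp [hm]
            rw [integral_add (g := fun ω => 2 * t * z ω + t ^ 2) hint2
              (by exact (hint.const_mul (2 * t)).add (integrable_const _)), e2]
        _ = S + 2 * t * m + t ^ 2 := by ring
    have hmarkov := mul_meas_ge_le_integral_of_nonneg
      (f := fun ω => (z ω + t) ^ 2) (Filter.Eventually.of_forall fun ω => sq_nonneg _)
      hint3 (t ^ 2)
    have hsub : {ω | 0 ≤ z ω} ⊆ {ω | t ^ 2 ≤ (z ω + t) ^ 2} := by
      intro ω hω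
      have : t ≤ z ω + t := by simp at hω ⊢; linarith
      exact sq_le_sq' (by nlinarith [htpos.le]) this
    have hmono : (μ {ω | 0 ≤ z ω}).toReal ≤ (μ {ω | t ^ 2 ≤ (z ω + t) ^ 2}).toReal :=
      ENNReal.toReal_mono (measure_ne_top _ _) (measure_mono hsub)
    have key : t ^ 2 * (μ {ω | 0 ≤ z ω}).toReal ≤ S + 2 * t * m + t ^ 2 := by
      calc t ^ 2 * (μ {ω | 0 ≤ z ω}).toReal
          ≤ t ^ 2 * (μ {ω | t ^ 2 ≤ (z ω + t) ^ 2}).toReal := by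
            exact mul_le_mul_of_nonneg_left hmono (sq_nonneg t)
        _ ≤ ∫ ω, (z ω + t) ^ 2 ∂μ := hmarkov
        _ = S + 2 * t * m + t ^ 2 := hI
    -- Now show bound ≤ (S - m^2)/S ≤ Δ
    have hm0 : m ≠ 0 := ne_of_lt hmlt
    have htm : t * (-m) = S := by
      rw [ht]; exact div_mul_cancel₀ _ (neg_ne_zero.mpr hm0)
    have hSmS : t ^ 2 * ((S - m ^ 2) / S) = S + 2 * t * m + t ^ 2 := by
      have hS0 : S ≠ 0 := ne_of_gt hpos
      field_simp
      linear_combination (t * m + S) * htm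
    have h1 : t ^ 2 * (μ {ω | 0 ≤ z ω}).toReal ≤ t ^ 2 * ((S - m ^ 2) / S) := by
      rw [hSmS]; exact key
    calc (μ {ω | 0 ≤ z ω}).toReal ≤ (S - m ^ 2) / S :=
          le_of_mul_le_mul_left h1 (pow_pos htpos 2)
      _ ≤ Δ := hratio
  · -- m = 0: ratio = 1, measure ≤ 1
    have : (S - m ^ 2) / S = 1 := by
      rw [hmeq]
      field_simp
      ring
    have hΔ : (1 : ℝ) ≤ Δ := this ▸ hratio
    calc (μ {ω | 0 ≤ z ω}).toReal ≤ (μ Set.univ).toReal :=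
          ENNReal.toReal_mono (measure_ne_top _ _) (measure_mono (Set.subset_univ _))
      _ = 1 := by simp
      _ ≤ Δ := hΔ
end
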